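/- arXiv:2603.08558 — 5 statements merged into one kernel-verified Lean document; each statement's English description precedes it below -/
import Mathlib

section
/- Let 1 ≤ k < d with λ_k < λ_{k+1}, and assume λ₂ > 0 (which holds by irreducibility and aperiodicity of P). Let Ψ̂ = (û₁, …, û_k) ∈ ℝ^{d×k} be the matrix whose columns are the features produced by ε-optimal GDO, and let v̂_k = Ψ̂ Ψ̂ᵀ Φ v be the Φ-weighted least-squares approximation of v using these features. Then ‖v − v̂_k‖_Φ ≤ ‖r̄‖_Φ · √(1/(λ₂ λ_{k+1})) + ‖v‖_Φ · √(2ε/(λ_{k+1} − λ_k)). -/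
open Matrix Finset

noncomputable def phiNorm {d : ℕ} (Φ : Matrix (Fin d) (Fin d) ℝ) (x : Fin d → ℝ) : ℝ :=
  Real.sqrt (x ⬝ᵥ (Φ *ᵥ x))

noncomputable def phiOpNorm {d : ℕ} (Φ A : Matrix (Fin d) (Fin d) ℝ) : ℝ :=
  sSup { c : ℝ | ∃ x : Fin d → ℝ, x ≠ 0 ∧ c = phiNorm Φ (A *ᵥ x) / phiNorm Φ x }


namespace GDOaux
variable {n : ℕ}

noncomputable def ip (φ x y : Fin n → ℝ) : ℝ := ∑ i, φ i * x i * y i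

lemma ip_comm (φ x y : Fin n → ℝ) : ip φ x y = ip φ y x := by
  unfold ip; apply Finset.sum_congr rfl; intros; ring

lemma ip_add_right (φ x y z : Fin n → ℝ) : ip φ x (y + z) = ip φ x y + ip φ x z := by
  unfold ip; rw [← Finset.sum_add_distrib]; apply Finset.sum_congr rfl; intros; simp [Pi.add_apply]; ring

lemma ip_sub_right (φ x y z : Fin n → ℝ) : ip φ x (y - z) = ip φ x y - ip φ x z := by
  unfold ip; rw [← Finset.sum_sub_distrib]; apply Finset.sum_congr rfl; intros; simp [Pi.sub_apply]; ring

lemma ip_smul_right (φ x y : Fin n → ℝ) (c : ℝ) : ip φ x (c • y) = c * ip φ x y := by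
  unfold ip; rw [Finset.mul_sum]; apply Finset.sum_congr rfl; intros; simp [Pi.smul_apply]; ring

lemma ip_zero_right (φ x : Fin n → ℝ) : ip φ x 0 = 0 := by
  unfold ip; simp

lemma ip_sum_right {α : Type*} (φ x : Fin n → ℝ) (S : Finset α) (f : α → Fin n → ℝ) :
    ip φ x (∑ a ∈ S, f a) = ∑ a ∈ S, ip φ x (f a) := by
  classical
  induction S using Finset.induction with
  | empty => simp [ip_zero_right]
  | @insert a s ha ih => rw [Finset.sum_insert ha, Finset.sum_insert ha, ip_add_right, ih]

lemma ip_self_nonneg (φ : Fin n → ℝ) (hφ : ∀ i, 0 ≤ φ i) (x : Fin n → ℝ) : 0 ≤ ip φ x x := by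
  unfold ip; apply Finset.sum_nonneg; intro i _
  have := hφ i; nlinarith [sq_nonneg (x i)]

noncomputable def nrm (φ x : Fin n → ℝ) : ℝ := Real.sqrt (ip φ x x)

lemma nrm_nonneg (φ x : Fin n → ℝ) : 0 ≤ nrm φ x := Real.sqrt_nonneg _

lemma sq_nrm (φ : Fin n → ℝ) (hφ : ∀ i, 0 ≤ φ i) (x : Fin n → ℝ) : nrm φ x ^ 2 = ip φ x x :=
  Real.sq_sqrt (ip_self_nonneg φ hφ x)

lemma ip_le (φ : Fin n → ℝ) (hφ : ∀ i, 0 ≤ φ i) (x y : Fin n → ℝ) :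
    ip φ x y ≤ nrm φ x * nrm φ y := by
  have key : (ip φ x y) ^ 2 ≤ ip φ x x * ip φ y y := by
    have h1 : ip φ x y = ∑ i, (Real.sqrt (φ i) * x i) * (Real.sqrt (φ i) * y i) := by
      unfold ip; apply Finset.sum_congr rfl; intro i _
      have : Real.sqrt (φ i) ^ 2 = φ i := Real.sq_sqrt (hφ i)
      linear_combination (- (x i * y i)) * this
    have h2 : ip φ x x = ∑ i, (Real.sqrt (φ i) * x i) ^ 2 := by
      unfold ip; apply Finset.sum_congr rfl; intro i _
      have : Real.sqrt (φ i) ^ 2 = φ i := Real.sq_sqrt (hφ i)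
      linear_combination (- (x i * x i)) * this
    have h3 : ip φ y y = ∑ i, (Real.sqrt (φ i) * y i) ^ 2 := by
      unfold ip; apply Finset.sum_congr rfl; intro i _
      have : Real.sqrt (φ i) ^ 2 = φ i := Real.sq_sqrt (hφ i)
      linear_combination (- (y i * y i)) * this
    rw [h1, h2, h3]; exact Finset.sum_mul_sq_le_sq_mul_sq _ _ _
  have hx := ip_self_nonneg φ hφ x
  have hy := ip_self_nonneg φ hφ y
  have : nrm φ x * nrm φ y = Real.sqrt (ip φ x x * ip φ y y) := (Real.sqrt_mul hx _).symm
  rw [this]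
  calc ip φ x y ≤ |ip φ x y| := le_abs_self _
    _ = Real.sqrt ((ip φ x y)^2) := (Real.sqrt_sq_eq_abs _).symm
    _ ≤ Real.sqrt (ip φ x x * ip φ y y) := Real.sqrt_le_sqrt key

lemma nrm_add_le (φ : Fin n → ℝ) (hφ : ∀ i, 0 ≤ φ i) (x y : Fin n → ℝ) :
    nrm φ (x + y) ≤ nrm φ x + nrm φ y := by
  have h : ip φ (x+y) (x+y) = ip φ x x + 2 * ip φ x y + ip φ y y := by
    rw [ip_add_right, ip_comm φ (x+y) x, ip_comm φ (x+y) y, ip_add_right, ip_add_right,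
      ip_comm φ y x]; ring
  have hcs := ip_le φ hφ x y
  have hx := nrm_nonneg φ x; have hy := nrm_nonneg φ y
  have h2 : ip φ (x+y) (x+y) ≤ (nrm φ x + nrm φ y)^2 := by
    rw [h]
    have := sq_nrm φ hφ x; have := sq_nrm φ hφ y
    nlinarith
  have := Real.sqrt_le_sqrt h2
  calc nrm φ (x+y) = Real.sqrt (ip φ (x+y) (x+y)) := rfl
    _ ≤ Real.sqrt ((nrm φ x + nrm φ y)^2) := this
    _ = |nrm φ x + nrm φ y| := Real.sqrt_sq_eq_abs _
    _ = nrm φ x + nrm φ y := abs_of_nonneg (by linarith)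

lemma nrm_smul (φ : Fin n → ℝ) (hφ : ∀ i, 0 ≤ φ i) (c : ℝ) (x : Fin n → ℝ) :
    nrm φ (c • x) = |c| * nrm φ x := by
  have : ip φ (c • x) (c • x) = c^2 * ip φ x x := by
    rw [ip_smul_right, ip_comm, ip_smul_right, ip_comm]; ring
  unfold nrm
  rw [this, Real.sqrt_mul (sq_nonneg c), Real.sqrt_sq_eq_abs]

lemma nrm_sum_le {α : Type*} (φ : Fin n → ℝ) (hφ : ∀ i, 0 ≤ φ i) (S : Finset α) (f : α → Fin n → ℝ) :
    nrm φ (∑ a ∈ S, f a) ≤ ∑ a ∈ S, nrm φ (f a) := by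
  classical
  induction S using Finset.induction with
  | empty => simp [nrm, ip_zero_right]
  | @insert a s ha ih =>
    rw [Finset.sum_insert ha, Finset.sum_insert ha]
    exact le_trans (nrm_add_le φ hφ _ _) (by linarith)

end GDOaux

namespace GDOaux
variable {n : ℕ}

lemma mulVec_apply' {m l : ℕ} (A : Matrix (Fin m) (Fin l) ℝ) (x : Fin l → ℝ) (i : Fin m) :
    (A *ᵥ x) i = ∑ j, A i j * x j := rfl

lemma ip_sub_sub (φ x y : Fin n → ℝ) :
    ip φ (x - y) (x - y) = ip φ x x - 2 * ip φ x y + ip φ y y := by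
  rw [ip_sub_right, ip_comm φ (x-y) x, ip_sub_right, ip_comm φ (x-y) y, ip_sub_right,
    ip_comm φ y x]; ring

lemma dot_eq_ip (φ x y : Fin n → ℝ) :
    x ⬝ᵥ (Matrix.diagonal φ *ᵥ y) = ip φ x y := by
  unfold ip
  simp only [dotProduct, Matrix.mulVec_diagonal]
  exact Finset.sum_congr rfl (fun i _ => by ring)

lemma phiNorm_diag (φ x : Fin n → ℝ) :
    Real.sqrt (x ⬝ᵥ (Matrix.diagonal φ *ᵥ x)) = nrm φ x := by
  rw [dot_eq_ip]; rfl

lemma mulVec_sum {α : Type*} (A : Matrix (Fin n) (Fin n) ℝ) (S : Finset α) (f : α → Fin n → ℝ) :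
    A *ᵥ (∑ a ∈ S, f a) = ∑ a ∈ S, A *ᵥ f a := by
  classical
  induction S using Finset.induction with
  | empty => simp [Matrix.mulVec_zero]
  | @insert a s ha ih => rw [Finset.sum_insert ha, Finset.sum_insert ha, Matrix.mulVec_add, ih]

lemma parseval (φ : Fin n → ℝ) (hφ : ∀ i, φ i ≠ 0)
    (u : Fin n → Fin n → ℝ)
    (horth : ∀ i j, ip φ (u i) (u j) = if i = j then 1 else 0)
    (x y : Fin n → ℝ) :
    ∑ i, ip φ (u i) x * ip φ (u i) y = ip φ x y := by
  classical
  set U : Matrix (Fin n) (Fin n) ℝ := Matrix.of u with hU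
  have h1 : U * (Matrix.diagonal φ * Uᵀ) = 1 := by
    ext i j
    have h : (U * (Matrix.diagonal φ * Uᵀ)) i j = ip φ (u i) (u j) := by
      unfold ip
      rw [Matrix.mul_apply]
      simp only [Matrix.diagonal_mul, Matrix.transpose_apply, hU, Matrix.of_apply]
      exact Finset.sum_congr rfl (fun s _ => by ring)
    rw [h, horth i j, Matrix.one_apply]
  have h2 : (Matrix.diagonal φ * Uᵀ) * U = 1 := mul_eq_one_comm.mp h1
  have hinv : Matrix.diagonal (fun s => (φ s)⁻¹) * Matrix.diagonal φ = 1 := by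
    rw [Matrix.diagonal_mul_diagonal]
    have : (fun s => (φ s)⁻¹ * φ s) = fun _ : Fin n => (1:ℝ) :=
      funext fun s => inv_mul_cancel₀ (hφ s)
    rw [this, Matrix.diagonal_one]
  have h3 : Uᵀ * U = Matrix.diagonal (fun s => (φ s)⁻¹) := by
    calc Uᵀ * U = (Matrix.diagonal (fun s => (φ s)⁻¹) * Matrix.diagonal φ) * (Uᵀ * U) := by
          rw [hinv, one_mul]
      _ = Matrix.diagonal (fun s => (φ s)⁻¹) * ((Matrix.diagonal φ * Uᵀ) * U) := by
          rw [Matrix.mul_assoc, Matrix.mul_assoc]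
      _ = Matrix.diagonal (fun s => (φ s)⁻¹) := by rw [h2, Matrix.mul_one]
  have key : ∀ z : Fin n → ℝ, (fun i => ip φ (u i) z) = U *ᵥ (fun s => φ s * z s) := by
    intro z; funext i
    unfold ip
    simp only [Matrix.mulVec, dotProduct, hU, Matrix.of_apply]
    exact Finset.sum_congr rfl (fun s _ => by ring)
  have hx := key x; have hy := key y
  have ha : ((Uᵀ * U) *ᵥ (fun s => φ s * x s)) = x := by
    rw [h3]; funext s
    simp only [Matrix.mulVec_diagonal]
    exact inv_mul_cancel_left₀ (hφ s) (x s)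
  calc ∑ i, ip φ (u i) x * ip φ (u i) y
      = ∑ i, (U *ᵥ (fun s => φ s * x s)) i * (U *ᵥ (fun s => φ s * y s)) i :=
        Finset.sum_congr rfl (fun i _ => by rw [congrFun hx i, congrFun hy i])
    _ = (U *ᵥ (fun s => φ s * x s)) ⬝ᵥ (U *ᵥ (fun s => φ s * y s)) := rfl
    _ = ((U *ᵥ (fun s => φ s * x s)) ᵥ* U) ⬝ᵥ (fun s => φ s * y s) :=
        Matrix.dotProduct_mulVec _ _ _
    _ = (Uᵀ *ᵥ (U *ᵥ (fun s => φ s * x s))) ⬝ᵥ (fun s => φ s * y s) := by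
        rw [Matrix.mulVec_transpose]
    _ = ((Uᵀ * U) *ᵥ (fun s => φ s * x s)) ⬝ᵥ (fun s => φ s * y s) := by
        rw [Matrix.mulVec_mulVec]
    _ = x ⬝ᵥ (fun s => φ s * y s) := by rw [ha]
    _ = ip φ x y := by
        unfold ip
        simp only [dotProduct]
        exact Finset.sum_congr rfl (fun s _ => by ring)

lemma bessel {k : ℕ} (φ : Fin n → ℝ) (hφ : ∀ i, 0 ≤ φ i) (w : Fin k → Fin n → ℝ)
    (horth : ∀ i j, ip φ (w i) (w j) = if i = j then 1 else 0) (x : Fin n → ℝ) :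
    ∑ j, (ip φ (w j) x)^2 ≤ ip φ x x := by
  classical
  set y : Fin n → ℝ := ∑ j, (ip φ (w j) x) • w j with hy
  have hxy : ip φ x y = ∑ j, (ip φ (w j) x)^2 := by
    rw [hy, ip_sum_right]
    refine Finset.sum_congr rfl (fun j _ => ?_)
    rw [ip_smul_right, ip_comm]; ring
  have hyy : ip φ y y = ∑ j, (ip φ (w j) x)^2 := by
    rw [hy, ip_sum_right]
    refine Finset.sum_congr rfl (fun j _ => ?_)
    rw [ip_smul_right]
    have : ip φ (∑ j', (ip φ (w j') x) • w j') (w j) = ip φ (w j) x := by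
      rw [ip_comm, ip_sum_right]
      rw [Finset.sum_eq_single j]
      · rw [ip_smul_right, horth]; simp
      · intro b _ hb
        rw [ip_smul_right, horth, if_neg (Ne.symm hb), mul_zero]
      · simp
    rw [this]; ring
  have h0 : 0 ≤ ip φ (x - y) (x - y) := ip_self_nonneg φ hφ _
  rw [ip_sub_sub, hxy, hyy] at h0
  linarith

lemma filter_eq_map {k : ℕ} (hkd : k ≤ n) :
    Finset.univ.filter (fun i : Fin n => (i:ℕ) < k)
      = Finset.univ.map ⟨Fin.castLE hkd, Fin.castLE_injective hkd⟩ := by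
  ext a
  simp only [Finset.mem_filter, Finset.mem_univ, true_and, Finset.mem_map,
    Function.Embedding.coeFn_mk]
  constructor
  · intro h; exact ⟨⟨a, h⟩, by ext; simp [Fin.castLE]⟩
  · rintro ⟨b, rfl⟩; exact b.2

lemma sum_S {k : ℕ} (hkd : k ≤ n) (f : Fin n → ℝ) :
    ∑ i ∈ Finset.univ.filter (fun i : Fin n => (i:ℕ) < k), f i
      = ∑ j : Fin k, f (Fin.castLE hkd j) := by
  rw [filter_eq_map hkd, Finset.sum_map]
  rfl

lemma ip_proj {k : ℕ} (φ : Fin n → ℝ) (w : Fin k → Fin n → ℝ) (x y : Fin n → ℝ) :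
    ip φ x ((Matrix.of (fun s i => w i s) * (Matrix.of (fun s i => w i s))ᵀ
        * Matrix.diagonal φ) *ᵥ y)
      = ∑ j, ip φ (w j) x * ip φ (w j) y := by
  classical
  set Ψ : Matrix (Fin n) (Fin k) ℝ := Matrix.of (fun s i => w i s) with hΨ
  have h1 : (Ψ * Ψᵀ * Matrix.diagonal φ) *ᵥ y = Ψ *ᵥ (fun j => ip φ (w j) y) := by
    have h2 : Ψᵀ *ᵥ (Matrix.diagonal φ *ᵥ y) = fun j => ip φ (w j) y := by
      funext j
      unfold ip
      rw [mulVec_apply']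
      simp only [Matrix.transpose_apply, hΨ, Matrix.of_apply, Matrix.mulVec_diagonal]
      exact Finset.sum_congr rfl (fun s _ => by ring)
    rw [← Matrix.mulVec_mulVec, ← Matrix.mulVec_mulVec, h2]
  rw [h1]
  calc ip φ x (Ψ *ᵥ fun j => ip φ (w j) y)
      = ∑ s, ∑ j, φ s * x s * (w j s * ip φ (w j) y) := by
        unfold ip
        refine Finset.sum_congr rfl (fun s _ => ?_)
        rw [mulVec_apply']
        simp only [hΨ, Matrix.of_apply]
        rw [Finset.mul_sum]
    _ = ∑ j, ∑ s, φ s * x s * (w j s * ip φ (w j) y) := Finset.sum_comm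
    _ = ∑ j, ip φ (w j) x * ip φ (w j) y := by
        refine Finset.sum_congr rfl (fun j _ => ?_)
        have : ip φ (w j) x * ip φ (w j) y = ∑ s, (φ s * w j s * x s) * ip φ (w j) y := by
          rw [← Finset.sum_mul]; rfl
        rw [this]
        exact Finset.sum_congr rfl (fun s _ => by ring)

end GDOaux

set_option maxHeartbeats 2000000 in
open GDOaux in
theorem stmt0 {d : ℕ} (hd : 2 ≤ d)
    (P : Matrix (Fin d) (Fin d) ℝ)
    (hP_nonneg : ∀ i j, 0 ≤ P i j)
    (hP_row : ∀ i, ∑ j, P i j = 1)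
    (hP_erg : ∃ n : ℕ, 1 ≤ n ∧ ∀ i j, 0 < (P ^ n) i j)
    (φ : Fin d → ℝ)
    (hφ_pos : ∀ i, 0 < φ i)
    (hφ_sum : ∑ i, φ i = 1)
    (hφ_stat : φ ᵥ* P = φ)
    (Φ : Matrix (Fin d) (Fin d) ℝ) (hΦ : Φ = Matrix.diagonal φ)
    (L : Matrix (Fin d) (Fin d) ℝ)
    (hL : L = 1 - (2⁻¹ : ℝ) • (P + Φ⁻¹ * Pᵀ * Φ))
    (lam : Fin d → ℝ) (u : Fin d → Fin d → ℝ)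
    (hlam_mono : Monotone lam)
    (hlam_zero : lam ⟨0, by omega⟩ = 0)
    (h_eig : ∀ i, L *ᵥ u i = lam i • u i)
    (h_orth : ∀ i j, (u i) ⬝ᵥ (Φ *ᵥ u j) = if i = j then 1 else 0)
    (hlam2_pos : 0 < lam ⟨1, by omega⟩)
    (k : ℕ) (hk1 : 1 ≤ k) (hkd : k < d)
    (hgap : lam ⟨k - 1, by omega⟩ < lam ⟨k, hkd⟩)
    (r rbar : Fin d → ℝ)
    (hrbar : rbar = r - (φ ⬝ᵥ r) • (fun _ => (1 : ℝ)))
    (v : Fin d → ℝ)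
    (hv : v = rbar + P *ᵥ v)
    (hv0 : φ ⬝ᵥ v = 0)
    (ε : ℝ) (hε : 0 < ε)
    (uhat : Fin k → Fin d → ℝ)
    (huhat_orth : ∀ i j, (uhat i) ⬝ᵥ (Φ *ᵥ uhat j) = if i = j then 1 else 0)
    (huhat_gdo : ∑ i, (uhat i) ⬝ᵥ (Φ *ᵥ (L *ᵥ uhat i))
        - ∑ i : Fin k, lam (Fin.castLE hkd.le i) < ε)
    (Ψhat : Matrix (Fin d) (Fin k) ℝ)
    (hΨhat : Ψhat = Matrix.of fun s i => uhat i s)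
    (vhat : Fin d → ℝ)
    (hvhat : vhat = (Ψhat * Ψhatᵀ * Φ) *ᵥ v) :
    phiNorm Φ (v - vhat)
      ≤ phiNorm Φ rbar * Real.sqrt (1 / (lam ⟨1, by omega⟩ * lam ⟨k, hkd⟩))
        + phiNorm Φ v * Real.sqrt (2 * ε / (lam ⟨k, hkd⟩ - lam ⟨k - 1, by omega⟩)) := by
  classical
  subst hΦ
  subst hΨhat
  have h1d : 1 < d := by omega
  have hk1d : k - 1 < d := by omega
  have hφ0 : ∀ i, φ i ≠ 0 := fun i => (hφ_pos i).ne'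
  have hφnn : ∀ i, (0:ℝ) ≤ φ i := fun i => (hφ_pos i).le
  have horth : ∀ i j, ip φ (u i) (u j) = if i = j then 1 else 0 := by
    intro i j; rw [← dot_eq_ip]; exact h_orth i j
  have huorth : ∀ i j, ip φ (uhat i) (uhat j) = if i = j then 1 else 0 := by
    intro i j; rw [← dot_eq_ip]; exact huhat_orth i j
  have hΦinv : (Matrix.diagonal φ)⁻¹ = Matrix.diagonal (fun i => (φ i)⁻¹) := by
    apply Matrix.inv_eq_right_inv
    rw [Matrix.diagonal_mul_diagonal]
    have h : (fun i => φ i * (φ i)⁻¹) = fun _ : Fin d => (1:ℝ) :=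
      funext fun i => mul_inv_cancel₀ (hφ0 i)
    rw [h, Matrix.diagonal_one]
  have hW : ∀ x y, ip φ x (((Matrix.diagonal φ)⁻¹ * Pᵀ * Matrix.diagonal φ) *ᵥ y)
      = ip φ (P *ᵥ x) y := by
    intro x y
    rw [← dot_eq_ip, ← dot_eq_ip, Matrix.mulVec_mulVec]
    have hm : Matrix.diagonal φ * ((Matrix.diagonal φ)⁻¹ * Pᵀ * Matrix.diagonal φ)
        = Pᵀ * Matrix.diagonal φ := by
      rw [hΦinv]
      simp only [← Matrix.mul_assoc]
      rw [Matrix.diagonal_mul_diagonal]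
      have h : (fun i => φ i * (φ i)⁻¹) = fun _ : Fin d => (1:ℝ) :=
        funext fun i => mul_inv_cancel₀ (hφ0 i)
      rw [h, Matrix.diagonal_one, Matrix.one_mul]
    rw [hm, ← Matrix.mulVec_mulVec, Matrix.dotProduct_mulVec, Matrix.vecMul_transpose]
  have hLlin : ∀ x y, ip φ x (L *ᵥ y)
      = ip φ x y - 2⁻¹ * (ip φ x (P *ᵥ y) + ip φ (P *ᵥ x) y) := by
    intro x y
    rw [hL, Matrix.sub_mulVec, Matrix.one_mulVec, ip_sub_right, Matrix.smul_mulVec,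
      ip_smul_right, Matrix.add_mulVec, ip_add_right, hW]
  have hLsymm : ∀ x y, ip φ x (L *ᵥ y) = ip φ y (L *ᵥ x) := by
    intro x y
    rw [hLlin, hLlin, ip_comm φ x y, ip_comm φ x (P *ᵥ y), ip_comm φ (P *ᵥ x) y]
    ring
  have hLeig : ∀ (i : Fin d) (x : Fin d → ℝ),
      ip φ (u i) (L *ᵥ x) = lam i * ip φ (u i) x := by
    intro i x
    rw [hLsymm, h_eig i, ip_smul_right, ip_comm]
  have hLsum : ∀ x y, ip φ x (L *ᵥ y)
      = ∑ i, lam i * (ip φ (u i) x * ip φ (u i) y) := by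
    intro x y
    rw [← parseval φ hφ0 u horth x (L *ᵥ y)]
    refine Finset.sum_congr rfl (fun i _ => ?_)
    rw [hLeig]; ring
  have hlam_nonneg : ∀ i, 0 ≤ lam i := by
    intro i
    have h0i : (⟨0, by omega⟩ : Fin d) ≤ i := by simp [Fin.le_def]
    calc (0:ℝ) = lam ⟨0, by omega⟩ := hlam_zero.symm
      _ ≤ lam i := hlam_mono h0i
  obtain ⟨one, hone⟩ : ∃ one : Fin d → ℝ, one = fun _ => 1 := ⟨_, rfl⟩
  have hPone : P *ᵥ one = one := by
    funext i
    rw [mulVec_apply']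
    simp only [hone, mul_one]
    exact hP_row i
  have honeL : ip φ one (L *ᵥ one) = 0 := by
    rw [hLlin, hPone]
    ring
  have hb : ∀ i : Fin d, i ≠ ⟨0, by omega⟩ → ip φ (u i) one = 0 := by
    have hsum : ∑ i, lam i * (ip φ (u i) one * ip φ (u i) one) = 0 := by
      rw [← hLsum one one, honeL]
    have hterm : ∀ i ∈ Finset.univ, (0:ℝ) ≤ lam i * (ip φ (u i) one * ip φ (u i) one) :=
      fun i _ => mul_nonneg (hlam_nonneg i) (mul_self_nonneg _)
    have hzero := (Finset.sum_eq_zero_iff_of_nonneg hterm).mp hsum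
    intro i hi
    have hli : 0 < lam i := by
      have hine : (i:ℕ) ≠ 0 := fun h => hi (Fin.ext h)
      have hle : (⟨1, h1d⟩ : Fin d) ≤ i := by simp [Fin.le_def]; omega
      exact lt_of_lt_of_le hlam2_pos (hlam_mono hle)
    have h := hzero i (Finset.mem_univ i)
    have hb2 : ip φ (u i) one * ip φ (u i) one = 0 :=
      (mul_eq_zero.mp h).resolve_left hli.ne'
    exact mul_self_eq_zero.mp hb2
  have hip_one_v : ip φ one v = 0 := by
    have h : ip φ one v = φ ⬝ᵥ v := by
      simp [GDOaux.ip, dotProduct, hone]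
    rw [h, hv0]
  have hc0 : ip φ (u ⟨0, by omega⟩) v = 0 := by
    have hps := parseval φ hφ0 u horth one v
    rw [hip_one_v] at hps
    have hsingle : ∑ i, ip φ (u i) one * ip φ (u i) v
        = ip φ (u ⟨0, by omega⟩) one * ip φ (u ⟨0, by omega⟩) v := by
      apply Finset.sum_eq_single
      · intro b _ hbne; rw [hb b hbne, zero_mul]
      · simp
    have hb0 : ip φ (u ⟨0, by omega⟩) one ≠ 0 := by
      have hps2 := parseval φ hφ0 u horth one one
      have h11 : ip φ one one = 1 := by
        simp only [GDOaux.ip, hone, mul_one]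
        exact hφ_sum
      rw [h11] at hps2
      have hsingle2 : ∑ i, ip φ (u i) one * ip φ (u i) one
          = ip φ (u ⟨0, by omega⟩) one * ip φ (u ⟨0, by omega⟩) one := by
        apply Finset.sum_eq_single
        · intro b _ hbne; rw [hb b hbne, zero_mul]
        · simp
      intro h0
      rw [hsingle2, h0, mul_zero] at hps2
      exact one_ne_zero hps2.symm
    rw [hsingle] at hps
    exact (mul_eq_zero.mp hps).resolve_left hb0
  -- coefficients and truncation
  obtain ⟨c, hcdef⟩ : ∃ c : Fin d → ℝ, c = fun i => ip φ (u i) v := ⟨_, rfl⟩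
  obtain ⟨Sk, hSk⟩ : ∃ Sk : Finset (Fin d),
      Sk = Finset.univ.filter (fun i : Fin d => (i:ℕ) < k) := ⟨_, rfl⟩
  have hmem : ∀ i : Fin d, i ∈ Sk ↔ (i:ℕ) < k := by
    intro i; simp [hSk]
  obtain ⟨vK, hvKdef⟩ : ∃ vK : Fin d → ℝ, vK = ∑ i ∈ Sk, c i • u i := ⟨_, rfl⟩
  obtain ⟨e, hedef⟩ : ∃ e : Fin d → ℝ, e = v - vK := ⟨_, rfl⟩
  have hcuK : ∀ j, ip φ (u j) vK = if j ∈ Sk then c j else 0 := by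
    intro j
    rw [hvKdef, ip_sum_right]
    have hterm : ∀ i ∈ Sk, ip φ (u j) (c i • u i) = if j = i then c i else 0 := by
      intro i _
      rw [ip_smul_right, horth j i, mul_ite, mul_one, mul_zero]
    rw [Finset.sum_congr rfl hterm, Finset.sum_ite_eq Sk j c]
  have hce : ∀ j, ip φ (u j) e = if j ∈ Sk then 0 else c j := by
    intro j
    rw [hedef, ip_sub_right, hcuK j]
    by_cases hj : j ∈ Sk <;> simp [hj, hcdef]
  have hvv : ip φ v v = ∑ i, c i ^ 2 := by
    rw [← parseval φ hφ0 u horth v v]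
    exact Finset.sum_congr rfl (fun i _ => by simp only [hcdef]; ring)
  have hee : ip φ e e = ∑ i, (if i ∈ Sk then 0 else c i ^ 2) := by
    rw [← parseval φ hφ0 u horth e e]
    refine Finset.sum_congr rfl (fun i _ => ?_)
    rw [hce i]
    by_cases hi : i ∈ Sk <;> simp [hi] <;> ring
  -- energy
  obtain ⟨A, hAdef⟩ : ∃ A : ℝ, A = ip φ v (L *ᵥ v) := ⟨_, rfl⟩
  have hrb : v - P *ᵥ v = rbar := by
    nth_rewrite 1 [hv]
    abel
  have hA1 : A = ip φ v rbar := by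
    rw [hAdef, hLlin, ip_comm φ (P *ᵥ v) v, ← hrb, ip_sub_right]
    ring
  have hA2 : A = ∑ i, lam i * c i ^ 2 := by
    rw [hAdef, hLsum v v]
    exact Finset.sum_congr rfl (fun i _ => by simp only [hcdef]; ring)
  have hA_nonneg : 0 ≤ A := by
    rw [hA2]
    exact Finset.sum_nonneg (fun i _ => mul_nonneg (hlam_nonneg i) (sq_nonneg _))
  have hl1K : lam ⟨1, h1d⟩ ≤ lam ⟨k, hkd⟩ := hlam_mono (by simp [Fin.le_def]; omega)
  have hlamK_pos : 0 < lam ⟨k, hkd⟩ := lt_of_lt_of_le hlam2_pos hl1K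
  have hδpos : 0 < lam ⟨k, hkd⟩ - lam ⟨k-1, hk1d⟩ := sub_pos.mpr hgap
  have h5 : lam ⟨1, h1d⟩ * ip φ v v ≤ A := by
    rw [hvv, hA2, Finset.mul_sum]
    apply Finset.sum_le_sum
    intro i _
    by_cases hi : i = ⟨0, by omega⟩
    · have hczero : c i = 0 := by rw [hi]; simp only [hcdef]; exact hc0
      rw [hczero]; simp
    · have hine : (i:ℕ) ≠ 0 := fun h => hi (Fin.ext h)
      have hle : lam ⟨1, h1d⟩ ≤ lam i := hlam_mono (by simp [Fin.le_def]; omega)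
      nlinarith [sq_nonneg (c i)]
  have h6 : A ≤ nrm φ v * nrm φ rbar := by
    rw [hA1]; exact ip_le φ hφnn v rbar
  have h7 : lam ⟨1, h1d⟩ * nrm φ v ≤ nrm φ rbar := by
    rcases eq_or_lt_of_le (nrm_nonneg φ v) with h0 | h0
    · rw [← h0, mul_zero]; exact nrm_nonneg φ rbar
    · have hsq := sq_nrm φ hφnn v
      have h' : (lam ⟨1, h1d⟩ * nrm φ v) * nrm φ v ≤ nrm φ rbar * nrm φ v := by
        nlinarith
      exact le_of_mul_le_mul_right h' h0
  have h8 : lam ⟨k, hkd⟩ * ip φ e e ≤ A := by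
    rw [hee, hA2, Finset.mul_sum]
    apply Finset.sum_le_sum
    intro i _
    by_cases hi : i ∈ Sk
    · simp only [hi, if_true, mul_zero]
      exact mul_nonneg (hlam_nonneg i) (sq_nonneg _)
    · simp only [hi, if_false]
      have hik : k ≤ (i:ℕ) := by
        by_contra hcon
        exact hi ((hmem i).mpr (by omega))
      have hle : lam ⟨k, hkd⟩ ≤ lam i := hlam_mono (by simp [Fin.le_def]; omega)
      nlinarith [sq_nonneg (c i)]
  have hNe : nrm φ e ≤ nrm φ rbar * Real.sqrt (1 / (lam ⟨1, h1d⟩ * lam ⟨k, hkd⟩)) := by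
    have hkey : ip φ e e ≤ nrm φ rbar ^ 2 * (1 / (lam ⟨1, h1d⟩ * lam ⟨k, hkd⟩)) := by
      have hmul : 0 < lam ⟨1, h1d⟩ * lam ⟨k, hkd⟩ := mul_pos hlam2_pos hlamK_pos
      rw [mul_one_div, le_div_iff₀ hmul]
      have e1 : lam ⟨1, h1d⟩ * (lam ⟨k, hkd⟩ * ip φ e e) ≤ lam ⟨1, h1d⟩ * A :=
        mul_le_mul_of_nonneg_left h8 hlam2_pos.le
      have e2 : lam ⟨1, h1d⟩ * A ≤ lam ⟨1, h1d⟩ * (nrm φ v * nrm φ rbar) :=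
        mul_le_mul_of_nonneg_left h6 hlam2_pos.le
      have e3 : (lam ⟨1, h1d⟩ * nrm φ v) * nrm φ rbar ≤ nrm φ rbar * nrm φ rbar :=
        mul_le_mul_of_nonneg_right h7 (nrm_nonneg φ rbar)
      nlinarith [e1, e2, e3, GDOaux.ip_self_nonneg φ hφnn e, nrm_nonneg φ rbar, nrm_nonneg φ v]
    have hs := Real.sqrt_le_sqrt hkey
    rw [Real.sqrt_mul (sq_nonneg _), Real.sqrt_sq (nrm_nonneg φ rbar)] at hs
    exact hs
  -- overlap coefficients with the GDO features
  obtain ⟨sc, hscdef⟩ : ∃ sc : Fin d → ℝ,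
      sc = fun i => ∑ j, (ip φ (uhat j) (u i))^2 := ⟨_, rfl⟩
  have hs_nonneg : ∀ i, 0 ≤ sc i := by
    intro i; rw [hscdef]
    exact Finset.sum_nonneg (fun j _ => sq_nonneg _)
  have hs_le1 : ∀ i, sc i ≤ 1 := by
    intro i
    have hbes := bessel φ hφnn uhat huorth (u i)
    rw [horth i i, if_pos rfl] at hbes
    rw [hscdef]
    exact hbes
  have hs_sum : ∑ i, sc i = (k : ℝ) := by
    rw [hscdef]
    calc ∑ i, ∑ j, (ip φ (uhat j) (u i))^2
        = ∑ j, ∑ i : Fin d, (ip φ (uhat j) (u i))^2 := Finset.sum_comm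
      _ = ∑ _j : Fin k, (1:ℝ) := by
          refine Finset.sum_congr rfl (fun j _ => ?_)
          calc ∑ i : Fin d, (ip φ (uhat j) (u i))^2
              = ∑ i, ip φ (u i) (uhat j) * ip φ (u i) (uhat j) :=
                Finset.sum_congr rfl (fun i _ => by rw [ip_comm]; ring)
            _ = ip φ (uhat j) (uhat j) := parseval φ hφ0 u horth _ _
            _ = 1 := by rw [huorth j j, if_pos rfl]
      _ = (k : ℝ) := by simp
  have hgdo : ∑ i, lam i * sc i - ∑ i ∈ Sk, lam i < ε := by
    have hform : ∑ j, ip φ (uhat j) (L *ᵥ uhat j) = ∑ i, lam i * sc i := by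
      calc ∑ j : Fin k, ip φ (uhat j) (L *ᵥ uhat j)
          = ∑ j, ∑ i, lam i * (ip φ (u i) (uhat j) * ip φ (u i) (uhat j)) :=
            Finset.sum_congr rfl (fun j _ => hLsum _ _)
        _ = ∑ i, ∑ j, lam i * (ip φ (u i) (uhat j) * ip φ (u i) (uhat j)) := Finset.sum_comm
        _ = ∑ i, lam i * sc i := by
            refine Finset.sum_congr rfl (fun i _ => ?_)
            rw [hscdef, Finset.mul_sum]
            exact Finset.sum_congr rfl (fun j _ => by rw [ip_comm]; ring)
    have hSsum : ∑ i ∈ Sk, lam i = ∑ j : Fin k, lam (Fin.castLE hkd.le j) := by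
      rw [hSk]; exact sum_S hkd.le lam
    have hdot : ∑ j, ip φ (uhat j) (L *ᵥ uhat j)
        = ∑ j, (uhat j) ⬝ᵥ (Matrix.diagonal φ *ᵥ (L *ᵥ uhat j)) :=
      Finset.sum_congr rfl (fun j _ => (dot_eq_ip _ _ _).symm)
    rw [← hform, hSsum, hdot]
    exact huhat_gdo
  obtain ⟨t, htdef⟩ : ∃ t : ℝ, t = ∑ i ∈ Sk, (1 - sc i) := ⟨_, rfl⟩
  have hcardSk : ∑ _i ∈ Sk, (1:ℝ) = (k:ℝ) := by
    rw [hSk, sum_S hkd.le (fun _ => (1:ℝ))]; simp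
  have ht_nonneg : 0 ≤ t := by
    rw [htdef]
    exact Finset.sum_nonneg (fun i _ => by linarith [hs_le1 i])
  have ht_split : ∑ i ∈ Finset.univ.filter (fun i : Fin d => ¬ ((i:ℕ) < k)), sc i = t := by
    have hsplit := Finset.sum_filter_add_sum_filter_not Finset.univ
      (fun i : Fin d => (i:ℕ) < k) sc
    rw [hs_sum] at hsplit
    have h2 : t = (k:ℝ) - ∑ i ∈ Sk, sc i := by
      rw [htdef, Finset.sum_sub_distrib, hcardSk]
    rw [← hSk] at hsplit
    linarith
  have hgap2 : (lam ⟨k, hkd⟩ - lam ⟨k-1, hk1d⟩) * t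
      ≤ ∑ i, lam i * sc i - ∑ i ∈ Sk, lam i := by
    have hsplit := Finset.sum_filter_add_sum_filter_not Finset.univ
      (fun i : Fin d => (i:ℕ) < k) (fun i => lam i * sc i)
    rw [← hSk] at hsplit
    have hlow : lam ⟨k, hkd⟩ * t
        ≤ ∑ i ∈ Finset.univ.filter (fun i : Fin d => ¬ ((i:ℕ) < k)), lam i * sc i := by
      rw [← ht_split, Finset.mul_sum]
      apply Finset.sum_le_sum
      intro i hi
      have hik : k ≤ (i:ℕ) := by
        simp only [Finset.mem_filter, Finset.mem_univ, true_and] at hi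
        omega
      have hle : lam ⟨k, hkd⟩ ≤ lam i := hlam_mono (by simp [Fin.le_def]; omega)
      nlinarith [hs_nonneg i]
    have hup : ∑ i ∈ Sk, lam i - ∑ i ∈ Sk, lam i * sc i ≤ lam ⟨k-1, hk1d⟩ * t := by
      rw [htdef, Finset.mul_sum, ← Finset.sum_sub_distrib]
      apply Finset.sum_le_sum
      intro i hi
      have hik : (i:ℕ) < k := (hmem i).mp hi
      have hle : lam i ≤ lam ⟨k-1, hk1d⟩ := hlam_mono (by simp [Fin.le_def]; omega)
      have h1s : 0 ≤ 1 - sc i := by linarith [hs_le1 i]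
      nlinarith [hlam_nonneg i]
    rw [sub_mul]
    linarith
  have ht_eps : t ≤ ε / (lam ⟨k, hkd⟩ - lam ⟨k-1, hk1d⟩) := by
    rw [le_div_iff₀ hδpos]
    nlinarith [hgap2, hgdo]
  -- projection matrix
  obtain ⟨Q, hQdef⟩ : ∃ Q : Matrix (Fin d) (Fin d) ℝ,
      Q = Matrix.of (fun s i => uhat i s) * (Matrix.of (fun s i => uhat i s))ᵀ
        * Matrix.diagonal φ := ⟨_, rfl⟩
  have hQ : ∀ x y, ip φ x (Q *ᵥ y) = ∑ j, ip φ (uhat j) x * ip φ (uhat j) y := by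
    intro x y; rw [hQdef]; exact ip_proj φ uhat x y
  have hQu : ∀ (j : Fin k) (x : Fin d → ℝ), ip φ (uhat j) (Q *ᵥ x) = ip φ (uhat j) x := by
    intro j x
    rw [hQ]
    rw [Finset.sum_eq_single j]
    · rw [huorth j j, if_pos rfl, one_mul]
    · intro b _ hb; rw [huorth b j, if_neg hb, zero_mul]
    · simp
  have hQQ : ∀ x y, ip φ (Q *ᵥ x) (Q *ᵥ y) = ip φ x (Q *ᵥ y) := by
    intro x y
    rw [hQ (Q *ᵥ x) y, hQ x y]
    exact Finset.sum_congr rfl (fun j _ => by rw [hQu j x])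
  have hvhatQ : vhat = Q *ᵥ v := by rw [hvhat, hQdef]
  -- decomposition
  have hv_eq : v = e + vK := by rw [hedef]; abel
  have hQv : Q *ᵥ v = Q *ᵥ e + Q *ᵥ vK := by
    nth_rewrite 1 [hv_eq]
    rw [Matrix.mulVec_add]
  have hveq : v - vhat = (e - Q *ᵥ e) + (vK - Q *ᵥ vK) := by
    rw [hvhatQ, hQv]
    nth_rewrite 1 [hv_eq]
    abel
  have main_tri : nrm φ (v - vhat) ≤ nrm φ (e - Q *ᵥ e) + nrm φ (vK - Q *ᵥ vK) := by
    rw [hveq]; exact nrm_add_le φ hφnn _ _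
  -- part 1 : contraction
  have hpart1 : nrm φ (e - Q *ᵥ e) ≤ nrm φ e := by
    have hineq : ip φ (e - Q *ᵥ e) (e - Q *ᵥ e) ≤ ip φ e e := by
      rw [ip_sub_sub]
      have h1 : ip φ (Q *ᵥ e) (Q *ᵥ e) = ip φ e (Q *ᵥ e) := hQQ e e
      have h2 : 0 ≤ ip φ e (Q *ᵥ e) := by
        rw [hQ]
        exact Finset.sum_nonneg (fun j _ => mul_self_nonneg _)
      linarith
    exact Real.sqrt_le_sqrt hineq
  -- part 2
  have hsum_w : vK - Q *ᵥ vK = ∑ i ∈ Sk, c i • (u i - Q *ᵥ u i) := by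
    rw [hvKdef, mulVec_sum, ← Finset.sum_sub_distrib]
    refine Finset.sum_congr rfl (fun i _ => ?_)
    rw [smul_sub, Matrix.mulVec_smul]
  have hw_norm : ∀ i : Fin d, (nrm φ (u i - Q *ᵥ u i))^2 = 1 - sc i := by
    intro i
    rw [sq_nrm φ hφnn, ip_sub_sub]
    have h1 : ip φ (Q *ᵥ u i) (Q *ᵥ u i) = ip φ (u i) (Q *ᵥ u i) := hQQ _ _
    have h2 : ip φ (u i) (Q *ᵥ u i) = sc i := by
      rw [hQ, hscdef]
      exact Finset.sum_congr rfl (fun j _ => (sq (ip φ (uhat j) (u i))).symm)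
    have h3 : ip φ (u i) (u i) = 1 := by rw [horth i i, if_pos rfl]
    rw [h1, h2, h3]
    ring
  have hpart2 : nrm φ (vK - Q *ᵥ vK)
      ≤ nrm φ v * Real.sqrt (ε / (lam ⟨k, hkd⟩ - lam ⟨k-1, hk1d⟩)) := by
    obtain ⟨X, hXdef⟩ : ∃ X : ℝ, X = ∑ i ∈ Sk, |c i| * nrm φ (u i - Q *ᵥ u i) := ⟨_, rfl⟩
    have step1 : nrm φ (vK - Q *ᵥ vK) ≤ X := by
      rw [hsum_w, hXdef]
      refine le_trans (nrm_sum_le φ hφnn _ _) ?_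
      exact le_of_eq (Finset.sum_congr rfl (fun i _ => nrm_smul φ hφnn (c i) _))
    have step2 : X^2 ≤ (∑ i ∈ Sk, c i ^ 2) * t := by
      rw [hXdef, htdef]
      have hcs := Finset.sum_mul_sq_le_sq_mul_sq Sk (fun i => |c i|)
        (fun i => nrm φ (u i - Q *ᵥ u i))
      have hl : ∑ i ∈ Sk, |c i| ^ 2 = ∑ i ∈ Sk, c i ^ 2 :=
        Finset.sum_congr rfl (fun i _ => sq_abs _)
      have hr : ∑ i ∈ Sk, (nrm φ (u i - Q *ᵥ u i)) ^ 2 = ∑ i ∈ Sk, (1 - sc i) :=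
        Finset.sum_congr rfl (fun i _ => hw_norm i)
      calc (∑ i ∈ Sk, |c i| * nrm φ (u i - Q *ᵥ u i))^2
          ≤ (∑ i ∈ Sk, |c i| ^ 2) * (∑ i ∈ Sk, (nrm φ (u i - Q *ᵥ u i)) ^ 2) := hcs
        _ = (∑ i ∈ Sk, c i ^ 2) * (∑ i ∈ Sk, (1 - sc i)) := by rw [hl, hr]
    have step3 : (∑ i ∈ Sk, c i ^ 2) ≤ nrm φ v ^ 2 := by
      rw [sq_nrm φ hφnn, hvv, hSk]
      exact Finset.sum_le_sum_of_subset_of_nonneg (Finset.filter_subset _ _)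
        (fun i _ _ => sq_nonneg _)
    have hX_nonneg : 0 ≤ X := by
      rw [hXdef]
      exact Finset.sum_nonneg (fun i _ => mul_nonneg (abs_nonneg _) (nrm_nonneg _ _))
    have hX2 : X^2 ≤ nrm φ v ^ 2 * (ε / (lam ⟨k, hkd⟩ - lam ⟨k-1, hk1d⟩)) := by
      have hc2 : 0 ≤ ∑ i ∈ Sk, c i ^ 2 := Finset.sum_nonneg (fun i _ => sq_nonneg _)
      nlinarith [step2, step3, ht_eps, ht_nonneg, sq_nonneg (nrm φ v)]
    have hXle : X ≤ nrm φ v * Real.sqrt (ε / (lam ⟨k, hkd⟩ - lam ⟨k-1, hk1d⟩)) := by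
      have h := Real.sqrt_le_sqrt hX2
      rw [Real.sqrt_mul (sq_nonneg _), Real.sqrt_sq (nrm_nonneg φ v)] at h
      calc X = Real.sqrt (X^2) := (Real.sqrt_sq hX_nonneg).symm
        _ ≤ _ := h
    exact le_trans step1 hXle
  have hsqrt2 : Real.sqrt (ε / (lam ⟨k, hkd⟩ - lam ⟨k-1, hk1d⟩))
      ≤ Real.sqrt (2 * ε / (lam ⟨k, hkd⟩ - lam ⟨k-1, hk1d⟩)) := by
    apply Real.sqrt_le_sqrt
    rw [div_le_div_iff₀ hδpos hδpos]
    nlinarith [hε, hδpos]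
  have hpart2' : nrm φ (vK - Q *ᵥ vK)
      ≤ nrm φ v * Real.sqrt (2 * ε / (lam ⟨k, hkd⟩ - lam ⟨k-1, hk1d⟩)) :=
    le_trans hpart2 (mul_le_mul_of_nonneg_left hsqrt2 (nrm_nonneg φ v))
  have hfinal : nrm φ (v - vhat)
      ≤ nrm φ rbar * Real.sqrt (1 / (lam ⟨1, h1d⟩ * lam ⟨k, hkd⟩))
        + nrm φ v * Real.sqrt (2 * ε / (lam ⟨k, hkd⟩ - lam ⟨k-1, hk1d⟩)) := by
    linarith [main_tri, hpart1, hNe, hpart2']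
  simp only [phiNorm]
  rw [phiNorm_diag, phiNorm_diag, phiNorm_diag]
  exact hfinal
end

section
/- (Graph Drawing Lemma) Suppose ∑_{i=1}^k ũ_iᵀ A ũ_i − ∑_{i=1}^k λ_i(A) < ε for some ε > 0. Then ‖Π_Ψ − Π_{Ψ̃}‖₂ < √(2ε / (λ_{k+1}(A) − λ_k(A))), where ‖·‖₂ is the spectral (operator 2-) norm. -/
/-!
The spectral norm is at most the Frobenius norm, and for the two rank-`k` projections
`‖Π_Ψ - Π_Ψ̃‖_F² = 2k - 2 tr(Π_Ψ Π_Ψ̃)`. In the eigenbasis, the weights `c_j = u_jᵀ Π_Ψ̃ u_j`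
are the diagonal of a symmetric idempotent, so they lie in `[0, 1]`, and they sum to `k`; moreover
`∑ ũ_iᵀ A ũ_i = ∑ λ_j c_j` and `tr(Π_Ψ Π_Ψ̃) = ∑_{j ≤ k} c_j`. Moving weight from the first `k`
eigenvalues to the others costs at least the gap, so the excess energy `ε` bounds
`(λ_{k+1} - λ_k) (k - ∑_{j ≤ k} c_j)`.
-/

open Matrix Finset

noncomputable def eNorm {d : ℕ} (x : Fin d → ℝ) : ℝ :=
  Real.sqrt (x ⬝ᵥ x)

noncomputable def specNorm {d : ℕ} (A : Matrix (Fin d) (Fin d) ℝ) : ℝ :=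
  sSup { c : ℝ | ∃ x : Fin d → ℝ, x ≠ 0 ∧ c = eNorm (A *ᵥ x) / eNorm x }

section

variable {ι κ n : Type*} [Fintype n]

lemma dotProduct_mulVec_self_le [Fintype ι] (M : Matrix ι n ℝ) (x : n → ℝ) :
    (M *ᵥ x) ⬝ᵥ (M *ᵥ x) ≤ (∑ s, ∑ t, M s t ^ 2) * (x ⬝ᵥ x) := by
  rw [sum_mul]
  refine sum_le_sum fun s _ => ?_
  simpa [mulVec, dotProduct, sq] using sum_mul_sq_le_sq_mul_sq univ (M s) x

lemma specNorm_le_sqrt_sum_sq {d : ℕ} (M : Matrix (Fin d) (Fin d) ℝ) :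
    specNorm M ≤ √(∑ s, ∑ t, M s t ^ 2) := by
  refine Real.sSup_le ?_ (Real.sqrt_nonneg _)
  rintro _ ⟨x, hx, rfl⟩
  have hx_pos : 0 < eNorm x := Real.sqrt_pos.2 (dotProduct_self_star_pos_iff.2 hx)
  rw [div_le_iff₀ hx_pos, eNorm, eNorm, ← Real.sqrt_mul (by positivity)]
  exact Real.sqrt_le_sqrt (dotProduct_mulVec_self_le M x)

lemma of_mul_transpose_of_orthonormal [DecidableEq κ] {v : κ → n → ℝ}
    (hv : ∀ i j, v i ⬝ᵥ v j = if i = j then 1 else 0) : of v * (of v)ᵀ = 1 := by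
  ext i j
  exact hv i j

lemma eq_transpose_mul_diagonal_mul [DecidableEq n] {R : Type*} [CommRing R]
    {A U : Matrix n n R} {lam : n → R} (hU : U * Uᵀ = 1) (hA : ∀ i, A *ᵥ U i = lam i • U i) :
    A = Uᵀ * diagonal lam * U := by
  have hAU : A * Uᵀ = Uᵀ * diagonal lam := by
    ext s j
    rw [mul_diagonal, transpose_apply]
    simpa [mul_apply, mulVec, dotProduct, mul_comm (U j s)] using congrFun (hA j) s
  calc A = A * (Uᵀ * U) := by rw [mul_eq_one_comm.1 hU, Matrix.mul_one]
    _ = Uᵀ * diagonal lam * U := by rw [← Matrix.mul_assoc, hAU]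

lemma sum_dotProduct_mulVec_eq_sum_mul_diag [Fintype κ] [DecidableEq n]
    {A U : Matrix n n ℝ} {lam : n → ℝ} (hU : U * Uᵀ = 1) (hA : ∀ i, A *ᵥ U i = lam i • U i)
    (v : κ → n → ℝ) :
    ∑ i, v i ⬝ᵥ (A *ᵥ v i) = ∑ j, lam j * (U * ((of v)ᵀ * of v) * Uᵀ) j j := by
  calc ∑ i, v i ⬝ᵥ (A *ᵥ v i) = trace (of v * (A * (of v)ᵀ)) := rfl
    _ = trace ((of v * Uᵀ) * (diagonal lam * U * (of v)ᵀ)) := by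
        rw [eq_transpose_mul_diagonal_mul hU hA]
        simp only [Matrix.mul_assoc]
    _ = trace (diagonal lam * (U * ((of v)ᵀ * of v) * Uᵀ)) := by
        rw [trace_mul_comm]
        simp only [Matrix.mul_assoc]
    _ = ∑ j, lam j * (U * ((of v)ᵀ * of v) * Uᵀ) j j := by simp [trace, diagonal_mul]

lemma Matrix.IsSymm.diag_mem_Icc_of_isIdempotentElem {G : Matrix n n ℝ} (hG : G.IsSymm)
    (hG' : IsIdempotentElem G) (j : n) : G j j ∈ Set.Icc 0 1 := by
  have hdiag : G j j = ∑ l, G j l ^ 2 := by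
    conv_lhs => rw [← hG'.eq]
    simp only [mul_apply, sq]
    exact sum_congr rfl fun l _ => by rw [hG.apply l j]
  have hsq : G j j ^ 2 ≤ G j j := hdiag ▸ single_le_sum (fun l _ => sq_nonneg (G j l)) (mem_univ j)
  have hnn : 0 ≤ G j j := hdiag ▸ sum_nonneg fun l _ => sq_nonneg (G j l)
  exact ⟨hnn, by nlinarith⟩

lemma isIdempotentElem_mul_transpose [Fintype κ] [DecidableEq κ] {Φ : Matrix n κ ℝ}
    (hΦ : Φᵀ * Φ = 1) : IsIdempotentElem (Φ * Φᵀ) := by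
  rw [IsIdempotentElem, Matrix.mul_assoc, ← Matrix.mul_assoc Φᵀ, hΦ, Matrix.one_mul]

lemma trace_mul_transpose_of_orthonormal [Fintype κ] [DecidableEq κ] {Φ : Matrix n κ ℝ}
    (hΦ : Φᵀ * Φ = 1) : trace (Φ * Φᵀ) = Fintype.card κ := by
  rw [trace_mul_comm, hΦ, trace_one]

lemma diag_mul_transpose_mem_Icc [Fintype κ] [DecidableEq κ] {Φ : Matrix n κ ℝ}
    (hΦ : Φᵀ * Φ = 1) (j : n) : (Φ * Φᵀ) j j ∈ Set.Icc 0 1 :=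
  IsSymm.diag_mem_Icc_of_isIdempotentElem (by rw [IsSymm, transpose_mul, transpose_transpose])
    (isIdempotentElem_mul_transpose hΦ) j

lemma sum_sq_eq_trace_mul_transpose [Fintype ι] (M : Matrix ι n ℝ) :
    ∑ s, ∑ t, M s t ^ 2 = trace (M * Mᵀ) := by
  simp [trace, mul_apply, sq]

lemma sum_sq_mul_transpose_sub [Fintype κ] [DecidableEq κ] {Ψ Φ : Matrix n κ ℝ}
    (hΨ : Ψᵀ * Ψ = 1) (hΦ : Φᵀ * Φ = 1) :
    ∑ s, ∑ t, (Ψ * Ψᵀ - Φ * Φᵀ) s t ^ 2 = 2 * Fintype.card κ - 2 * trace (Ψᵀ * (Φ * Φᵀ) * Ψ) := by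
  have hPQ : trace (Ψ * Ψᵀ * (Φ * Φᵀ)) = trace (Ψᵀ * (Φ * Φᵀ) * Ψ) := by
    rw [Matrix.mul_assoc, trace_mul_comm]
  have hQP : trace (Φ * Φᵀ * (Ψ * Ψᵀ)) = trace (Ψᵀ * (Φ * Φᵀ) * Ψ) := by
    rw [trace_mul_comm, hPQ]
  have hsq : (Ψ * Ψᵀ - Φ * Φᵀ) * (Ψ * Ψᵀ - Φ * Φᵀ) = Ψ * Ψᵀ * (Ψ * Ψᵀ) - Ψ * Ψᵀ * (Φ * Φᵀ)
      - Φ * Φᵀ * (Ψ * Ψᵀ) + Φ * Φᵀ * (Φ * Φᵀ) := by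
    noncomm_ring
  rw [sum_sq_eq_trace_mul_transpose, transpose_sub, transpose_mul, transpose_mul,
    transpose_transpose, transpose_transpose, hsq, (isIdempotentElem_mul_transpose hΨ).eq,
    (isIdempotentElem_mul_transpose hΦ).eq, trace_add, trace_sub, trace_sub, hPQ, hQP,
    trace_mul_transpose_of_orthonormal hΨ, trace_mul_transpose_of_orthonormal hΦ]
  ring

lemma mul_card_sub_sum_le [Fintype ι] [DecidableEq ι] (s : Finset ι) {lam c : ι → ℝ} {a b : ℝ}
    (hlam_s : ∀ j ∈ s, lam j ≤ a) (hlam_sc : ∀ j ∉ s, b ≤ lam j)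
    (hc_s : ∀ j ∈ s, c j ≤ 1) (hc_sc : ∀ j ∉ s, 0 ≤ c j) (hc : ∑ j, c j = #s) :
    (b - a) * (#s - ∑ j ∈ s, c j) ≤ ∑ j, lam j * c j - ∑ j ∈ s, lam j := by
  have h_in : ∑ j ∈ s, a * (c j - 1) ≤ ∑ j ∈ s, (lam j * c j - lam j) :=
    sum_le_sum fun j hj => by nlinarith [hlam_s j hj, hc_s j hj]
  have h_out : ∑ j ∈ sᶜ, b * c j ≤ ∑ j ∈ sᶜ, lam j * c j :=
    sum_le_sum fun j hj =>
      mul_le_mul_of_nonneg_right (hlam_sc j (mem_compl.1 hj)) (hc_sc j (mem_compl.1 hj))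
  have hc_sc_sum : ∑ j ∈ sᶜ, c j = #s - ∑ j ∈ s, c j := by
    rw [← hc, ← sum_add_sum_compl s c]
    ring
  simp only [← mul_sum, sum_sub_distrib, sum_const, nsmul_one] at h_in
  rw [← mul_sum, hc_sc_sum] at h_out
  rw [← sum_add_sum_compl s (fun j => lam j * c j)]
  linarith

end

lemma Monotone.mul_sub_sum_castLE_le {d k : ℕ} (hkd : k < d) {lam c : Fin d → ℝ}
    (hlam : Monotone lam) (hc : ∀ j, c j ∈ Set.Icc 0 1) (hc_sum : ∑ j, c j = k) :
    (lam ⟨k, hkd⟩ - lam ⟨k - 1, (k.sub_le 1).trans_lt hkd⟩)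
        * (k - ∑ i : Fin k, c (Fin.castLE hkd.le i))
      ≤ ∑ j, lam j * c j - ∑ i : Fin k, lam (Fin.castLE hkd.le i) := by
  set s := univ.map (Fin.castLEEmb hkd.le)
  have h_mem : ∀ j, j ∈ s ↔ (j : ℕ) < k := fun j =>
    ⟨fun hj => by obtain ⟨i, -, rfl⟩ := mem_map.1 hj; exact i.2,
      fun hj => mem_map.2 ⟨⟨j, hj⟩, mem_univ _, rfl⟩⟩
  have h_low : ∀ j ∈ s, lam j ≤ lam ⟨k - 1, (k.sub_le 1).trans_lt hkd⟩ :=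
    fun j hj => hlam (Fin.le_iff_val_le_val.2 (by have := (h_mem j).1 hj; simp; omega))
  have h_high : ∀ j ∉ s, lam ⟨k, hkd⟩ ≤ lam j :=
    fun j hj => hlam (Fin.le_iff_val_le_val.2 (by have := (h_mem j).not.1 hj; simp; omega))
  have h := mul_card_sub_sum_le _ h_low h_high
    (fun j _ => (hc j).2) (fun j _ => (hc j).1) (by simpa [s] using hc_sum)
  simpa only [s, sum_map, card_map, card_univ, Fintype.card_fin, Fin.coe_castLEEmb] using h

theorem stmt2 {d : ℕ}
    (A : Matrix (Fin d) (Fin d) ℝ)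
    (lam : Fin d → ℝ) (u : Fin d → Fin d → ℝ)
    (hlam_mono : Monotone lam)
    (h_eig : ∀ i, A *ᵥ u i = lam i • u i)
    (h_orth : ∀ i j, (u i) ⬝ᵥ (u j) = if i = j then 1 else 0)
    (k : ℕ) (hkd : k < d)
    (hgap : lam ⟨k - 1, by omega⟩ < lam ⟨k, hkd⟩)
    (utld : Fin k → Fin d → ℝ)
    (h_orth' : ∀ i j, (utld i) ⬝ᵥ (utld j) = if i = j then 1 else 0)
    (ε : ℝ)
    (hgdo : ∑ i, (utld i) ⬝ᵥ (A *ᵥ utld i)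
        - ∑ i : Fin k, lam (Fin.castLE hkd.le i) < ε)
    (Ψ : Matrix (Fin d) (Fin k) ℝ)
    (hΨ : Ψ = Matrix.of fun s i => u (Fin.castLE hkd.le i) s)
    (Ψt : Matrix (Fin d) (Fin k) ℝ)
    (hΨt : Ψt = Matrix.of fun s i => utld i s) :
    specNorm (Ψ * Ψᵀ - Ψt * Ψtᵀ)
      < Real.sqrt (2 * ε / (lam ⟨k, hkd⟩ - lam ⟨k - 1, by omega⟩)) := by
  set U : Matrix (Fin d) (Fin d) ℝ := of u
  have hU : U * Uᵀ = 1 := of_mul_transpose_of_orthonormal h_orth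
  have hΨ_orth : Ψᵀ * Ψ = 1 := hΨ ▸ of_mul_transpose_of_orthonormal fun i j =>
    (h_orth _ _).trans (by simp [Fin.castLE_inj])
  have hΨt_orth : Ψtᵀ * Ψt = 1 := hΨt ▸ of_mul_transpose_of_orthonormal h_orth'
  -- `Π_Ψ̃` in the eigenbasis; its diagonal entries are the weights `c_j`.
  set G := U * (Ψt * Ψtᵀ) * Uᵀ
  have hG : G = (U * Ψt) * (U * Ψt)ᵀ := by simp only [G, transpose_mul, Matrix.mul_assoc]
  have hUΨt_orth : (U * Ψt)ᵀ * (U * Ψt) = 1 := by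
    rw [transpose_mul, Matrix.mul_assoc, ← Matrix.mul_assoc Uᵀ, mul_eq_one_comm.1 hU,
      Matrix.one_mul, hΨt_orth]
  have h_weights := hlam_mono.mul_sub_sum_castLE_le hkd (c := fun j => G j j)
    (fun j => hG ▸ diag_mul_transpose_mem_Icc hUΨt_orth j)
    (by simpa [hG, trace] using trace_mul_transpose_of_orthonormal hUΨt_orth)
  have h_energy : ∑ i, utld i ⬝ᵥ (A *ᵥ utld i) = ∑ j, lam j * G j j := by
    subst hΨt
    exact sum_dotProduct_mulVec_eq_sum_mul_diag hU h_eig utld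
  have h_frob : ∑ s, ∑ t, (Ψ * Ψᵀ - Ψt * Ψtᵀ) s t ^ 2
      = 2 * k - 2 * ∑ i : Fin k, G (Fin.castLE hkd.le i) (Fin.castLE hkd.le i) := by
    rw [sum_sq_mul_transpose_sub hΨ_orth hΨt_orth, Fintype.card_fin]
    subst hΨ
    rfl
  have h_frob_lt : ∑ s, ∑ t, (Ψ * Ψᵀ - Ψt * Ψtᵀ) s t ^ 2
      < 2 * ε / (lam ⟨k, hkd⟩ - lam ⟨k - 1, by omega⟩) := by
    rw [h_frob, lt_div_iff₀ (sub_pos.2 hgap)]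
    linarith
  calc specNorm (Ψ * Ψᵀ - Ψt * Ψtᵀ) ≤ √(∑ s, ∑ t, (Ψ * Ψᵀ - Ψt * Ψtᵀ) s t ^ 2) :=
        specNorm_le_sqrt_sum_sq _
    _ < _ := Real.sqrt_lt_sqrt (by positivity) h_frob_lt
end

section
/- Let v, w, z ∈ ℝ^d satisfy φᵀv = φᵀw = φᵀz = 0, (I − P)w = v, and Lz = v. Then vᵀΦw ≤ vᵀΦz. (Equivalently: on the subspace V = {x : φᵀx = 0}, the Φ-symmetrization of the inverse of (I−P)|_V is dominated, in the Φ-weighted quadratic form sense, by the inverse of L|_V.) -/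
open Matrix Finset

theorem stmt8 {d : ℕ} (hd : 2 ≤ d)
    (P : Matrix (Fin d) (Fin d) ℝ)
    (hP_nonneg : ∀ i j, 0 ≤ P i j)
    (hP_row : ∀ i, ∑ j, P i j = 1)
    (hP_erg : ∃ n : ℕ, 1 ≤ n ∧ ∀ i j, 0 < (P ^ n) i j)
    (φ : Fin d → ℝ)
    (hφ_pos : ∀ i, 0 < φ i)
    (hφ_sum : ∑ i, φ i = 1)
    (hφ_stat : φ ᵥ* P = φ)
    (Φ : Matrix (Fin d) (Fin d) ℝ) (hΦ : Φ = Matrix.diagonal φ)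
    (L : Matrix (Fin d) (Fin d) ℝ)
    (hL : L = 1 - (2⁻¹ : ℝ) • (P + Φ⁻¹ * Pᵀ * Φ))
    (v w z : Fin d → ℝ)
    (hv0 : φ ⬝ᵥ v = 0) (hw0 : φ ⬝ᵥ w = 0) (hz0 : φ ⬝ᵥ z = 0)
    (hw : (1 - P) *ᵥ w = v)
    (hz : L *ᵥ z = v) :
    v ⬝ᵥ (Φ *ᵥ w) ≤ v ⬝ᵥ (Φ *ᵥ z) := by
  set S := Φ - (2⁻¹ : ℝ) • (Φ * P + Pᵀ * Φ) with hS
  have hΦT : Φᵀ = Φ := by rw [hΦ]; exact Matrix.diagonal_transpose φ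
  have hST : Sᵀ = S := by
    simp [hS, Matrix.transpose_sub, Matrix.transpose_smul, Matrix.transpose_add,
      Matrix.transpose_mul, hΦT, add_comm]
  have hdet : IsUnit Φ.det := by
    rw [hΦ, Matrix.det_diagonal]
    exact (Finset.prod_pos (fun i _ => hφ_pos i)).ne'.isUnit
  have hΦinv : Φ * Φ⁻¹ = 1 := Matrix.mul_nonsing_inv Φ hdet
  have hΦL : Φ * L = S := by
    rw [hL, hS]
    have haux : Φ * (Φ⁻¹ * Pᵀ * Φ) = Pᵀ * Φ := by
      rw [← Matrix.mul_assoc, ← Matrix.mul_assoc, hΦinv, Matrix.one_mul]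
    rw [Matrix.mul_sub, Matrix.mul_one, Matrix.mul_smul, Matrix.mul_add, haux]
  have hSz : S *ᵥ z = Φ *ᵥ v := by
    rw [← hΦL, ← Matrix.mulVec_mulVec, hz]
  have hstat : ∀ j, ∑ i, φ i * P i j = φ j := by
    intro j
    have := congrFun hφ_stat j
    simpa [Matrix.vecMul, dotProduct] using this
  have hdot : ∀ x y : Fin d → ℝ, x ⬝ᵥ (Φ *ᵥ y) = ∑ i, x i * (φ i * y i) := by
    intro x y
    rw [hΦ]
    simp only [dotProduct, Matrix.mulVec_diagonal]
  have hdiag1 : ∀ x : Fin d → ℝ, x ⬝ᵥ (Φ *ᵥ x) = ∑ i, φ i * x i ^ 2 := by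
    intro x
    rw [hdot]
    exact Finset.sum_congr rfl fun i _ => by ring
  have hdiag2 : ∀ x : Fin d → ℝ,
      x ⬝ᵥ ((Φ * P) *ᵥ x) = ∑ i, ∑ j, φ i * P i j * (x i * x j) := by
    intro x
    rw [← Matrix.mulVec_mulVec, hdot]
    simp only [Matrix.mulVec, dotProduct, Finset.mul_sum]
    exact Finset.sum_congr rfl fun i _ => Finset.sum_congr rfl fun j _ => by ring
  have hdiag3 : ∀ x : Fin d → ℝ,
      x ⬝ᵥ ((Pᵀ * Φ) *ᵥ x) = ∑ i, ∑ j, φ i * P i j * (x i * x j) := by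
    intro x
    rw [← Matrix.mulVec_mulVec, Matrix.dotProduct_mulVec, Matrix.vecMul_transpose,
      hdot]
    simp only [Matrix.mulVec, dotProduct, Finset.sum_mul]
    exact Finset.sum_congr rfl fun i _ => Finset.sum_congr rfl fun j _ => by ring
  have hquad : ∀ x : Fin d → ℝ,
      x ⬝ᵥ (S *ᵥ x) = ∑ i, φ i * x i ^ 2 - ∑ i, ∑ j, φ i * P i j * (x i * x j) := by
    intro x
    simp only [hS, Matrix.sub_mulVec, Matrix.smul_mulVec, Matrix.add_mulVec,
      dotProduct_sub, dotProduct_smul, dotProduct_add]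
    rw [hdiag1, hdiag2, hdiag3]
    simp only [smul_eq_mul]
    ring
  have hPSD : ∀ x : Fin d → ℝ, 0 ≤ x ⬝ᵥ (S *ᵥ x) := by
    intro x
    rw [hquad]
    have hle : ∑ i, ∑ j, φ i * P i j * (x i * x j)
        ≤ ∑ i, ∑ j, φ i * P i j * ((x i ^ 2 + x j ^ 2) / 2) := by
      refine Finset.sum_le_sum fun i _ => Finset.sum_le_sum fun j _ => ?_
      have h0 : 0 ≤ φ i * P i j := mul_nonneg (hφ_pos i).le (hP_nonneg i j)
      nlinarith [sq_nonneg (x i - x j)]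
    have heq : ∑ i, ∑ j, φ i * P i j * ((x i ^ 2 + x j ^ 2) / 2)
        = ∑ i, φ i * x i ^ 2 := by
      have hsplit : ∀ i j, φ i * P i j * ((x i ^ 2 + x j ^ 2) / 2)
          = φ i * x i ^ 2 / 2 * P i j + φ i * P i j * (x j ^ 2 / 2) := by
        intro i j; ring
      simp only [hsplit, Finset.sum_add_distrib]
      have hA : ∑ i, ∑ j, φ i * x i ^ 2 / 2 * P i j = ∑ i, φ i * x i ^ 2 / 2 := by
        refine Finset.sum_congr rfl fun i _ => ?_
        rw [← Finset.mul_sum, hP_row i, mul_one]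
      have hB : ∑ i, ∑ j, φ i * P i j * (x j ^ 2 / 2) = ∑ i, φ i * x i ^ 2 / 2 := by
        rw [Finset.sum_comm]
        refine Finset.sum_congr rfl fun j _ => ?_
        calc ∑ i, φ i * P i j * (x j ^ 2 / 2) = (∑ i, φ i * P i j) * (x j ^ 2 / 2) := by
              rw [Finset.sum_mul]
          _ = φ j * x j ^ 2 / 2 := by rw [hstat j]; ring
      rw [hA, hB, ← Finset.sum_add_distrib]
      exact Finset.sum_congr rfl fun i _ => by ring
    linarith
  have hsymm : ∀ x y : Fin d → ℝ, x ⬝ᵥ (S *ᵥ y) = y ⬝ᵥ (S *ᵥ x) := by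
    intro x y
    calc x ⬝ᵥ (S *ᵥ y) = (x ᵥ* S) ⬝ᵥ y := Matrix.dotProduct_mulVec x S y
      _ = (x ᵥ* Sᵀ) ⬝ᵥ y := by rw [hST]
      _ = (S *ᵥ x) ⬝ᵥ y := by rw [Matrix.vecMul_transpose]
      _ = y ⬝ᵥ (S *ᵥ x) := dotProduct_comm _ _
  have hΦsymm : ∀ x y : Fin d → ℝ, x ⬝ᵥ (Φ *ᵥ y) = y ⬝ᵥ (Φ *ᵥ x) := by
    intro x y
    calc x ⬝ᵥ (Φ *ᵥ y) = (x ᵥ* Φ) ⬝ᵥ y := Matrix.dotProduct_mulVec x Φ y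
      _ = (x ᵥ* Φᵀ) ⬝ᵥ y := by rw [hΦT]
      _ = (Φ *ᵥ x) ⬝ᵥ y := by rw [Matrix.vecMul_transpose]
      _ = y ⬝ᵥ (Φ *ᵥ x) := dotProduct_comm _ _
  have hwSw : w ⬝ᵥ (S *ᵥ w) = w ⬝ᵥ (Φ *ᵥ v) := by
    have hΦv : Φ *ᵥ v = Φ *ᵥ ((1 - P) *ᵥ w) := by rw [hw]
    rw [hΦv, Matrix.mulVec_mulVec, Matrix.mul_sub, Matrix.mul_one, hquad w,
      Matrix.sub_mulVec, dotProduct_sub, hdiag1 w, hdiag2 w]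
  have hwSz : w ⬝ᵥ (S *ᵥ z) = w ⬝ᵥ (Φ *ᵥ v) := by rw [hSz]
  have key := hPSD (z - w)
  have hexp : (z - w) ⬝ᵥ (S *ᵥ (z - w))
      = z ⬝ᵥ (S *ᵥ z) - 2 * (w ⬝ᵥ (S *ᵥ z)) + w ⬝ᵥ (S *ᵥ w) := by
    simp only [Matrix.mulVec_sub, dotProduct_sub, sub_dotProduct]
    rw [hsymm z w]
    ring
  rw [hexp, hwSz, hwSw] at key
  have hgw : v ⬝ᵥ (Φ *ᵥ w) = w ⬝ᵥ (Φ *ᵥ v) := hΦsymm v w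
  have hgz : v ⬝ᵥ (Φ *ᵥ z) = z ⬝ᵥ (Φ *ᵥ v) := hΦsymm v z
  have hzSz : z ⬝ᵥ (S *ᵥ z) = z ⬝ᵥ (Φ *ᵥ v) := by rw [hSz]
  rw [hgw, hgz]
  rw [hzSz] at key
  linarith
end

section
/- Let A ∈ ℝ^{n×n} be an invertible matrix such that sym(A) := (A + Aᵀ)/2 is positive definite. Then sym(A⁻¹) ⪯ [sym(A)]⁻¹, i.e., the matrix [sym(A)]⁻¹ − (A⁻¹ + (A⁻¹)ᵀ)/2 is positive semidefinite. -/
/-!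
Write `S` for the symmetric part of `A` and `P = A⁻¹`. Conjugating `A + Aᵀ` by `P` gives
`P S Pᵀ = (P + Pᵀ) / 2`, and expanding `(P - S⁻¹) S (P - S⁻¹)ᵀ` then yields
`S⁻¹ - (P + Pᵀ) / 2`: a congruence transform of the positive definite `S`, hence positive
semidefinite.
-/

open Matrix

namespace Matrix

variable {n : Type*} [Fintype n] [DecidableEq n] {R : Type*} [CommRing R]

theorem nonsing_inv_mul_add_transpose_mul_transpose_nonsing_inv (A : Matrix n n R)
    (hA : IsUnit A.det) : A⁻¹ * (A + Aᵀ) * A⁻¹ᵀ = A⁻¹ + A⁻¹ᵀ := by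
  have hAT : Aᵀ * A⁻¹ᵀ = 1 := by rw [← transpose_mul, nonsing_inv_mul A hA, transpose_one]
  rw [Matrix.mul_add, nonsing_inv_mul A hA, Matrix.add_mul, Matrix.one_mul,
    Matrix.mul_assoc, hAT, Matrix.mul_one, add_comm]

theorem sub_nonsing_inv_mul_mul_transpose_sub_nonsing_inv {S : Matrix n n R} (hS : Sᵀ = S)
    (hdet : IsUnit S.det) (P : Matrix n n R) :
    (P - S⁻¹) * S * (P - S⁻¹)ᵀ = P * S * Pᵀ - P - Pᵀ + S⁻¹ := by
  have hSinvT : S⁻¹ᵀ = S⁻¹ := by rw [transpose_nonsing_inv, hS]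
  rw [transpose_sub, hSinvT, Matrix.sub_mul, Matrix.sub_mul, Matrix.mul_sub, Matrix.mul_sub,
    nonsing_inv_mul S hdet, Matrix.mul_assoc P S S⁻¹, mul_nonsing_inv S hdet, Matrix.mul_one,
    Matrix.one_mul, Matrix.one_mul]
  abel

end Matrix

theorem stmt9 {n : ℕ}
    (A : Matrix (Fin n) (Fin n) ℝ)
    (hA_inv : IsUnit A.det)
    (hsym_pd : ((2⁻¹ : ℝ) • (A + Aᵀ)).PosDef) :
    (((2⁻¹ : ℝ) • (A + Aᵀ))⁻¹ - (2⁻¹ : ℝ) • (A⁻¹ + (A⁻¹)ᵀ)).PosSemidef := by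
  set S := (2⁻¹ : ℝ) • (A + Aᵀ)
  have hST : Sᵀ = S := by simpa using hsym_pd.isHermitian.eq
  have hSdet : IsUnit S.det := (isUnit_iff_isUnit_det S).mp hsym_pd.isUnit
  have hconj : A⁻¹ * S * A⁻¹ᵀ = (2⁻¹ : ℝ) • (A⁻¹ + A⁻¹ᵀ) := by
    rw [Matrix.mul_smul, Matrix.smul_mul,
      nonsing_inv_mul_add_transpose_mul_transpose_nonsing_inv A hA_inv]
  have key : S⁻¹ - (2⁻¹ : ℝ) • (A⁻¹ + A⁻¹ᵀ) = (A⁻¹ - S⁻¹) * S * (A⁻¹ - S⁻¹)ᴴ := by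
    rw [conjTranspose_eq_transpose_of_trivial,
      sub_nonsing_inv_mul_mul_transpose_sub_nonsing_inv hST hSdet, hconj]
    module
  rw [key]
  exact hsym_pd.posSemidef.mul_mul_conjTranspose_same _
end

section
/- Let A ∈ ℝ^{d×d} be symmetric positive semidefinite with orthonormal eigenbasis u₁, …, u_d (A u_i = λ_i u_i, u_iᵀu_j = δ_{ij}) and eigenvalues λ₁ ≤ … ≤ λ_d, and let 1 ≤ k < d. Let Π = ∑_{i=1}^k u_i u_iᵀ be the orthogonal projector onto span(u₁, …, u_k), and let ũ₁, …, ũ_k ∈ ℝ^d be orthonormal. Then ∑_{i=1}^k ũ_iᵀ A ũ_i − ∑_{i=1}^k λ_i ≥ (λ_{k+1} − λ_k) · ∑_{i=1}^k ‖(I − Π) ũ_i‖₂². -/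
open Matrix Finset

lemma dp_sum_left {d : ℕ} {ι : Type*} (s : Finset ι) (f : ι → Fin d → ℝ) (w : Fin d → ℝ) :
    (∑ i ∈ s, f i) ⬝ᵥ w = ∑ i ∈ s, f i ⬝ᵥ w := by
  simp only [dotProduct, Finset.sum_apply, Finset.sum_mul]
  exact Finset.sum_comm

lemma dp_sum_right {d : ℕ} {ι : Type*} (s : Finset ι) (f : ι → Fin d → ℝ) (w : Fin d → ℝ) :
    w ⬝ᵥ (∑ i ∈ s, f i) = ∑ i ∈ s, w ⬝ᵥ f i := by
  simp only [dotProduct, Finset.sum_apply, Finset.mul_sum]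
  exact Finset.sum_comm

lemma sum_fin_lt {M : Type*} [AddCommMonoid M] {d k : ℕ} (hkd : k ≤ d) (g : Fin d → M) :
    ∑ j : Fin d, (if (j : ℕ) < k then g j else 0) = ∑ i : Fin k, g (Fin.castLE hkd i) := by
  rw [← Finset.sum_filter]
  have hset : Finset.filter (fun j : Fin d => (j : ℕ) < k) Finset.univ
      = Finset.map (Fin.castLEEmb hkd) Finset.univ := by
    ext j
    simp only [Finset.mem_filter, Finset.mem_univ, true_and, Finset.mem_map, Fin.castLEEmb]
    constructor
    · intro h; exact ⟨⟨j, h⟩, by simp [Fin.castLE]⟩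
    · rintro ⟨i, -, rfl⟩; simp
  rw [hset, Finset.sum_map]
  rfl

theorem stmt14 {d : ℕ}
    (A : Matrix (Fin d) (Fin d) ℝ)
    (hA_symm : Aᵀ = A)
    (hA_psd : ∀ x : Fin d → ℝ, 0 ≤ x ⬝ᵥ (A *ᵥ x))
    (lam : Fin d → ℝ) (u : Fin d → Fin d → ℝ)
    (hlam_mono : Monotone lam)
    (h_eig : ∀ i, A *ᵥ u i = lam i • u i)
    (h_orth : ∀ i j, (u i) ⬝ᵥ (u j) = if i = j then 1 else 0)
    (k : ℕ) (hk1 : 1 ≤ k) (hkd : k < d)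
    (Pik : Matrix (Fin d) (Fin d) ℝ)
    (hPik : Pik = ∑ i : Fin k,
        Matrix.vecMulVec (u (Fin.castLE hkd.le i)) (u (Fin.castLE hkd.le i)))
    (utld : Fin k → Fin d → ℝ)
    (h_orth' : ∀ i j, (utld i) ⬝ᵥ (utld j) = if i = j then 1 else 0) :
    (lam ⟨k, hkd⟩ - lam ⟨k - 1, by omega⟩) * ∑ i, (eNorm ((1 - Pik) *ᵥ utld i)) ^ 2
      ≤ ∑ i, (utld i) ⬝ᵥ (A *ᵥ utld i) - ∑ i : Fin k, lam (Fin.castLE hkd.le i) := by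
  classical
  set U : Matrix (Fin d) (Fin d) ℝ := Matrix.of u with hU
  have hUUt : U * Uᵀ = 1 := by
    ext i j
    simpa [Matrix.mul_apply, Matrix.one_apply, dotProduct, hU] using h_orth i j
  have hUtU : Uᵀ * U = 1 := mul_eq_one_comm.mp hUUt
  set c : Fin k → Fin d → ℝ := fun i => U *ᵥ utld i with hc
  have hrec : ∀ i, Uᵀ *ᵥ c i = utld i := by
    intro i
    rw [hc, Matrix.mulVec_mulVec, hUtU, Matrix.one_mulVec]
  have hinner : ∀ v w : Fin d → ℝ, (Uᵀ *ᵥ v) ⬝ᵥ (Uᵀ *ᵥ w) = v ⬝ᵥ w := by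
    intro v w
    rw [Matrix.mulVec_transpose, Matrix.dotProduct_mulVec, Matrix.vecMul_vecMul, hUUt,
      Matrix.vecMul_one]
  have hAU : A * Uᵀ = Uᵀ * Matrix.diagonal lam := by
    ext x j
    rw [Matrix.mul_diagonal]
    have h1 := congrFun (h_eig j) x
    simp only [Matrix.mulVec, dotProduct, Pi.smul_apply, smul_eq_mul] at h1
    simp only [Matrix.mul_apply, Matrix.transpose_apply, hU, Matrix.of_apply]
    rw [h1, mul_comm]
  have hAv : ∀ v : Fin d → ℝ, A *ᵥ (Uᵀ *ᵥ v) = Uᵀ *ᵥ (fun j => lam j * v j) := by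
    intro v
    rw [Matrix.mulVec_mulVec, hAU, ← Matrix.mulVec_mulVec]
    have hdg : Matrix.diagonal lam *ᵥ v = fun j => lam j * v j :=
      funext fun j => Matrix.mulVec_diagonal lam v j
    rw [hdg]
  have henergy : ∀ i, utld i ⬝ᵥ (A *ᵥ utld i) = ∑ j, lam j * (c i j) ^ 2 := by
    intro i
    conv_lhs => rw [← hrec i, hAv, hinner]
    simp only [dotProduct]
    exact Finset.sum_congr rfl fun j _ => by ring
  have hcdef : ∀ i j, c i j = u j ⬝ᵥ utld i := fun i j => rfl
  have hPv : ∀ i, Pik *ᵥ utld i = Uᵀ *ᵥ (fun j => if (j : ℕ) < k then c i j else 0) := by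
    intro i
    funext y
    have hrhs : (Uᵀ *ᵥ (fun j => if (j : ℕ) < k then c i j else 0)) y
        = ∑ j : Fin k, u (Fin.castLE hkd.le j) y * c i (Fin.castLE hkd.le j) := by
      rw [← sum_fin_lt hkd.le (fun z => u z y * c i z)]
      simp only [Matrix.mulVec, dotProduct, Matrix.transpose_apply, hU, Matrix.of_apply]
      exact Finset.sum_congr rfl fun z _ => by split <;> simp
    rw [hrhs, hPik]
    simp only [Matrix.mulVec, dotProduct, Matrix.sum_apply, Matrix.vecMulVec_apply,
      Finset.sum_mul]
    rw [Finset.sum_comm]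
    refine Finset.sum_congr rfl fun j _ => ?_
    rw [hcdef, dotProduct, Finset.mul_sum]
    exact Finset.sum_congr rfl fun z _ => by ring
  have hres : ∀ i, (1 - Pik) *ᵥ utld i
      = Uᵀ *ᵥ (fun j => if (j : ℕ) < k then 0 else c i j) := by
    intro i
    rw [Matrix.sub_mulVec, Matrix.one_mulVec, hPv, ← hrec i, ← Matrix.mulVec_sub]
    have hv : (c i - fun j : Fin d => if (j : ℕ) < k then c i j else 0)
        = fun j : Fin d => if (j : ℕ) < k then 0 else c i j := by
      funext j
      by_cases hj : (j : ℕ) < k <;> simp [hj]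
    rw [hv]
  have hdpnn : ∀ v : Fin d → ℝ, 0 ≤ v ⬝ᵥ v :=
    fun v => Finset.sum_nonneg fun x _ => mul_self_nonneg _
  have hnormsq : ∀ i, (eNorm ((1 - Pik) *ᵥ utld i)) ^ 2
      = ∑ j : Fin d, (if (j : ℕ) < k then 0 else (c i j) ^ 2) := by
    intro i
    rw [eNorm, Real.sq_sqrt (hdpnn _), hres, hinner]
    simp only [dotProduct]
    refine Finset.sum_congr rfl fun j _ => by split <;> simp [sq]
  have hnorm1 : ∀ i, ∑ j : Fin d, (c i j) ^ 2 = 1 := by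
    intro i
    have h := hinner (c i) (c i)
    rw [hrec i, h_orth' i i, if_pos rfl] at h
    simp only [dotProduct] at h
    calc ∑ j : Fin d, (c i j) ^ 2 = ∑ j : Fin d, c i j * c i j := by
          exact Finset.sum_congr rfl fun j _ => sq (c i j)
      _ = 1 := h.symm
  have hbessel : ∀ j : Fin d, (∑ i : Fin k, (c i j) ^ 2) ≤ 1 := by
    intro j
    set sv : Fin d → ℝ := ∑ i : Fin k, c i j • utld i with hsdef
    have h1 : u j ⬝ᵥ sv = ∑ i : Fin k, (c i j) ^ 2 := by
      rw [hsdef, dp_sum_right]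
      refine Finset.sum_congr rfl fun i _ => ?_
      rw [dotProduct_smul, ← hcdef i j]
      simp [sq]
    have h2 : sv ⬝ᵥ u j = ∑ i : Fin k, (c i j) ^ 2 := by
      rw [dotProduct_comm]; exact h1
    have h3 : sv ⬝ᵥ sv = ∑ i : Fin k, (c i j) ^ 2 := by
      rw [hsdef, dp_sum_left]
      refine Finset.sum_congr rfl fun i _ => ?_
      rw [smul_dotProduct, dp_sum_right]
      have hterm : ∀ i' : Fin k, utld i ⬝ᵥ (c i' j • utld i')
          = if i = i' then c i' j else 0 := by
        intro i'
        rw [dotProduct_smul, h_orth' i i']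
        split <;> simp
      rw [Finset.sum_congr rfl fun i' _ => hterm i', Finset.sum_ite_eq]
      simp [sq]
    have h0 : (0:ℝ) ≤ (u j - sv) ⬝ᵥ (u j - sv) := hdpnn _
    rw [sub_dotProduct, dotProduct_sub, dotProduct_sub, h_orth j j, if_pos rfl,
      h1, h2, h3] at h0
    linarith
  set t : Fin d → ℝ := fun j => ∑ i : Fin k, (c i j) ^ 2 with ht
  have htnn : ∀ j, 0 ≤ t j := fun j => Finset.sum_nonneg fun i _ => sq_nonneg _
  have hsumt : ∑ j : Fin d, t j = (k : ℝ) := by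
    rw [ht, Finset.sum_comm]
    simp [hnorm1]
  set a := lam ⟨k - 1, by omega⟩ with ha
  set b := lam ⟨k, hkd⟩ with hb
  have hLHS : ∑ i : Fin k, (eNorm ((1 - Pik) *ᵥ utld i)) ^ 2
      = ∑ j : Fin d, (if (j : ℕ) < k then 0 else t j) := by
    rw [Finset.sum_congr rfl fun i _ => hnormsq i, Finset.sum_comm]
    refine Finset.sum_congr rfl fun j _ => ?_
    split <;> simp [ht]
  have hRHS1 : ∑ i : Fin k, utld i ⬝ᵥ (A *ᵥ utld i) = ∑ j : Fin d, lam j * t j := by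
    rw [Finset.sum_congr rfl fun i _ => henergy i, Finset.sum_comm]
    refine Finset.sum_congr rfl fun j _ => ?_
    rw [ht, Finset.mul_sum]
  have hRHS2 : ∑ i : Fin k, lam (Fin.castLE hkd.le i)
      = ∑ j : Fin d, (if (j : ℕ) < k then lam j else 0) :=
    (sum_fin_lt hkd.le lam).symm
  have hones : ∑ j : Fin d, (if (j : ℕ) < k then (1:ℝ) else 0) = (k : ℝ) := by
    rw [sum_fin_lt hkd.le (fun _ => (1:ℝ))]
    simp
  have hkey : ∀ j : Fin d, a * (if (j : ℕ) < k then t j - 1 else t j)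
      ≤ lam j * t j - (if (j : ℕ) < k then lam j else 0)
        - (b - a) * (if (j : ℕ) < k then 0 else t j) := by
    intro j
    by_cases hj : (j : ℕ) < k
    · simp only [if_pos hj]
      have hla : lam j ≤ a := hlam_mono (by rw [Fin.le_def]; simp; omega)
      have h1 : t j ≤ 1 := hbessel j
      nlinarith [htnn j]
    · simp only [if_neg hj]
      have hlb : b ≤ lam j := hlam_mono (by rw [Fin.le_def]; simp; omega)
      nlinarith [htnn j]
  have hsum := Finset.sum_le_sum fun j (_ : j ∈ Finset.univ) => hkey j
  have hL : ∑ j : Fin d, a * (if (j : ℕ) < k then t j - 1 else t j) = 0 := by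
    rw [← Finset.mul_sum]
    have hsplit : ∑ j : Fin d, (if (j : ℕ) < k then t j - 1 else t j)
        = ∑ j : Fin d, (t j - (if (j : ℕ) < k then (1:ℝ) else 0)) := by
      refine Finset.sum_congr rfl fun j _ => ?_
      split <;> ring
    rw [hsplit, Finset.sum_sub_distrib, hsumt, hones, sub_self, mul_zero]
  rw [hL] at hsum
  rw [Finset.sum_sub_distrib, Finset.sum_sub_distrib, ← Finset.mul_sum] at hsum
  rw [hLHS, hRHS1, hRHS2]
  linarith
end
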